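/- The center M of the circle through the six points A_b, A_c, B_a, B_c, C_a, C_b lies on the line OL and satisfies the vector relation M - L = (3/4)(O - L), where O is the circumcenter. -/
import Mathlib


open EuclideanGeometry RealInnerProductSpace

noncomputable section

abbrev Pt := EuclideanSpace ℝ (Fin 2)

/-- The Lemoine (symmedian) point of a triangle, with barycentric
coordinates `(a², b², c²)`. -/
noncomputable def lemoinePoint (A B C : Pt) : Pt :=
  ((dist B C) ^ 2 / ((dist B C) ^ 2 + (dist C A) ^ 2 + (dist A B) ^ 2)) • A +
  ((dist C A) ^ 2 / ((dist B C) ^ 2 + (dist C A) ^ 2 + (dist A B) ^ 2)) • B +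
  ((dist A B) ^ 2 / ((dist B C) ^ 2 + (dist C A) ^ 2 + (dist A B) ^ 2)) • C

/-- Two circles are tangent at `x`: both pass through `x` and their centers
are collinear with `x` (hence they share the tangent line at `x`). -/
def CircleTangentAt (s t : EuclideanGeometry.Sphere Pt) (x : Pt) : Prop :=
  x ∈ s ∧ x ∈ t ∧ Collinear ℝ ({s.center, t.center, x} : Set Pt)

/-- The power of a point with respect to a circle. -/
noncomputable def circlePower (p : Pt) (s : EuclideanGeometry.Sphere Pt) : ℝ :=
  dist p s.center ^ 2 - s.radius ^ 2

private lemma collinear_param {P Q X : Pt} (h : Collinear ℝ ({P, Q, X} : Set Pt))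
    (hPQ : P ≠ Q) : ∃ μ : ℝ, X = P + μ • (Q - P) := by
  obtain ⟨v, hv⟩ := (collinear_iff_of_mem (Set.mem_insert P {Q, X})).mp h
  obtain ⟨a, haQ⟩ := hv Q (by simp)
  obtain ⟨b, hbX⟩ := hv X (by simp)
  have ha0 : a ≠ 0 := by
    rintro rfl
    simp only [zero_smul, zero_vadd] at haQ
    exact hPQ haQ.symm
  refine ⟨b / a, ?_⟩
  have hQP : Q - P = a • v := by
    rw [haQ]; simp [vadd_eq_add]
  rw [hbX, hQP, smul_smul, div_mul_cancel₀ _ ha0, vadd_eq_add, add_comm]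

private lemma expand4 (e va vb vc : Pt)
    (g0 g1 g2 g3 g01 g02 g03 g12 g13 g23 : ℝ)
    (h0 : ⟪e, e⟫ = g0) (h1 : ⟪va, va⟫ = g1) (h2 : ⟪vb, vb⟫ = g2) (h3 : ⟪vc, vc⟫ = g3)
    (h01 : ⟪e, va⟫ = g01) (h02 : ⟪e, vb⟫ = g02) (h03 : ⟪e, vc⟫ = g03)
    (h12 : ⟪va, vb⟫ = g12) (h13 : ⟪va, vc⟫ = g13) (h23 : ⟪vb, vc⟫ = g23)
    (x0 x1 x2 x3 y0 y1 y2 y3 : ℝ) :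
    ⟪x0 • e + x1 • va + x2 • vb + x3 • vc, y0 • e + y1 • va + y2 • vb + y3 • vc⟫
      = x0*y0*g0 + x1*y1*g1 + x2*y2*g2 + x3*y3*g3
        + (x0*y1 + x1*y0)*g01 + (x0*y2 + x2*y0)*g02 + (x0*y3 + x3*y0)*g03
        + (x1*y2 + x2*y1)*g12 + (x1*y3 + x3*y1)*g13 + (x2*y3 + x3*y2)*g23 := by
  have c01 : ⟪va, e⟫ = g01 := by rw [real_inner_comm]; exact h01
  have c02 : ⟪vb, e⟫ = g02 := by rw [real_inner_comm]; exact h02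
  have c03 : ⟪vc, e⟫ = g03 := by rw [real_inner_comm]; exact h03
  have c12 : ⟪vb, va⟫ = g12 := by rw [real_inner_comm]; exact h12
  have c13 : ⟪vc, va⟫ = g13 := by rw [real_inner_comm]; exact h13
  have c23 : ⟪vc, vb⟫ = g23 := by rw [real_inner_comm]; exact h23
  simp only [inner_add_left, inner_add_right, real_inner_smul_left, real_inner_smul_right,
    h0, h1, h2, h3, h01, h02, h03, h12, h13, h23, c01, c02, c03, c12, c13, c23]
  ring

set_option maxHeartbeats 1000000 in
private lemma key (O A B C L A' O₁ X : Pt) (R r₁ : ℝ) (hR : 0 < R)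
    (ha : dist A O = R) (hb : dist B O = R) (hc : dist C O = R)
    (hbc : B ≠ C) (hca : C ≠ A) (hab : A ≠ B)
    (hL : (dist B C ^ 2 + dist C A ^ 2 + dist A B ^ 2) • (L - O)
        = dist B C ^ 2 • (A - O) + dist C A ^ 2 • (B - O) + dist A B ^ 2 • (C - O))
    (hA'ne : A' ≠ A) (hA'col : Collinear ℝ ({A, L, A'} : Set Pt)) (hA'O : dist A' O = R)
    (hcol : Collinear ℝ ({O₁, O, A'} : Set Pt))
    (h1 : dist A' O₁ = r₁) (h2 : dist L O₁ = r₁)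
    (hX : X ∈ affineSpan ℝ ({B, C} : Set Pt)) (hXO : dist X O₁ = r₁) :
    dist X (L + (3/4 : ℝ) • (O - L)) ^ 2
      = (9 * R ^ 2 * (dist B C ^ 2 + dist C A ^ 2 + dist A B ^ 2) ^ 2
          - 3 * (dist B C ^ 2 * (dist C A ^ 2 * dist A B ^ 2)))
        / (16 * (dist B C ^ 2 + dist C A ^ 2 + dist A B ^ 2) ^ 2) := by
  set a2 := dist B C ^ 2 with ha2
  set b2 := dist C A ^ 2 with hb2
  set c2 := dist A B ^ 2 with hc2
  have hA2 : (0:ℝ) < a2 := by rw [ha2]; exact pow_pos (dist_pos.mpr hbc) 2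
  have hB2 : (0:ℝ) < b2 := by rw [hb2]; exact pow_pos (dist_pos.mpr hca) 2
  have hC2 : (0:ℝ) < c2 := by rw [hc2]; exact pow_pos (dist_pos.mpr hab) 2
  have hσ : (0:ℝ) < a2 + b2 + c2 := by linarith
  have hσ0 : a2 + b2 + c2 ≠ 0 := ne_of_gt hσ
  have h3abc : (0:ℝ) < 3 * (a2 * (b2 * c2)) := by positivity
  have haO2 : ‖A - O‖ ^ 2 = R ^ 2 := by rw [← dist_eq_norm, ha]
  have hbO2 : ‖B - O‖ ^ 2 = R ^ 2 := by rw [← dist_eq_norm, hb]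
  have hcO2 : ‖C - O‖ ^ 2 = R ^ 2 := by rw [← dist_eq_norm, hc]
  have gaa : ⟪A - O, A - O⟫ = R ^ 2 := by
    rw [real_inner_self_eq_norm_sq, haO2]
  have gbb : ⟪B - O, B - O⟫ = R ^ 2 := by
    rw [real_inner_self_eq_norm_sq, hbO2]
  have gcc : ⟪C - O, C - O⟫ = R ^ 2 := by
    rw [real_inner_self_eq_norm_sq, hcO2]
  have gab : ⟪A - O, B - O⟫ = R ^ 2 - c2 / 2 := by
    have h := norm_sub_sq_real (A - O) (B - O)
    have e : (A - O) - (B - O) = A - B := by abel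
    have h3 : ‖A - B‖ ^ 2 = c2 := by rw [← dist_eq_norm, hc2]
    rw [e, h3, haO2, hbO2] at h
    linarith
  have gac : ⟪A - O, C - O⟫ = R ^ 2 - b2 / 2 := by
    have h := norm_sub_sq_real (A - O) (C - O)
    have e : (A - O) - (C - O) = A - C := by abel
    have h3 : ‖A - C‖ ^ 2 = b2 := by rw [← dist_eq_norm, dist_comm, hb2]
    rw [e, h3, haO2, hcO2] at h
    linarith
  have gbc : ⟪B - O, C - O⟫ = R ^ 2 - a2 / 2 := by
    have h := norm_sub_sq_real (B - O) (C - O)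
    have e : (B - O) - (C - O) = B - C := by abel
    have h3 : ‖B - C‖ ^ 2 = a2 := by rw [← dist_eq_norm, ha2]
    rw [e, h3, hbO2, hcO2] at h
    linarith
  have gba : ⟪B - O, A - O⟫ = R ^ 2 - c2 / 2 := by rw [real_inner_comm]; exact gab
  have gca : ⟪C - O, A - O⟫ = R ^ 2 - b2 / 2 := by rw [real_inner_comm]; exact gac
  have gcb : ⟪C - O, B - O⟫ = R ^ 2 - a2 / 2 := by rw [real_inner_comm]; exact gbc
  have hEa : (a2 + b2 + c2) * ⟪L - O, A - O⟫
      = a2 * R ^ 2 + b2 * (R ^ 2 - c2 / 2) + c2 * (R ^ 2 - b2 / 2) := by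
    rw [← real_inner_smul_left, hL]
    simp only [inner_add_left, real_inner_smul_left, gaa, gba, gca]
  have hEb : (a2 + b2 + c2) * ⟪L - O, B - O⟫
      = a2 * (R ^ 2 - c2 / 2) + b2 * R ^ 2 + c2 * (R ^ 2 - a2 / 2) := by
    rw [← real_inner_smul_left, hL]
    simp only [inner_add_left, real_inner_smul_left, gab, gbb, gcb]
  have hEc : (a2 + b2 + c2) * ⟪L - O, C - O⟫
      = a2 * (R ^ 2 - b2 / 2) + b2 * (R ^ 2 - a2 / 2) + c2 * R ^ 2 := by
    rw [← real_inner_smul_left, hL]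
    simp only [inner_add_left, real_inner_smul_left, gac, gbc, gcc]
  have hEE : (a2 + b2 + c2) * ((a2 + b2 + c2) * ⟪L - O, L - O⟫)
      = (a2 + b2 + c2) ^ 2 * R ^ 2 - 3 * (a2 * (b2 * c2)) := by
    have e1 : ⟪(a2 + b2 + c2) • (L - O), (a2 + b2 + c2) • (L - O)⟫
        = (a2 + b2 + c2) * ((a2 + b2 + c2) * ⟪L - O, L - O⟫) := by
      rw [real_inner_smul_left, real_inner_smul_right]
    rw [← e1, hL]
    simp only [inner_add_left, inner_add_right, real_inner_smul_left, real_inner_smul_right,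
      gaa, gbb, gcc, gab, gba, gac, gca, gbc, gcb]
    ring
  have hEEn : (a2 + b2 + c2) * ((a2 + b2 + c2) * ‖L - O‖ ^ 2)
      = (a2 + b2 + c2) ^ 2 * R ^ 2 - 3 * (a2 * (b2 * c2)) := by
    rw [← real_inner_self_eq_norm_sq]; exact hEE
  -- L is strictly inside the circle, in particular L ≠ A
  have hLA : L ≠ A := by
    intro h
    have h' : ‖L - O‖ ^ 2 = R ^ 2 := by rw [h, haO2]
    rw [h'] at hEEn
    have hz : (3:ℝ) * (a2 * (b2 * c2)) = 0 := by linear_combination hEEn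
    linarith
  have hALn : A ≠ L := hLA.symm
  have hnA : (0:ℝ) < ‖L - A‖ ^ 2 := pow_pos (norm_pos_iff.mpr (sub_ne_zero.mpr hLA)) 2
  have hLA2 : ‖L - A‖ ^ 2 = ‖L - O‖ ^ 2 - 2 * ⟪L - O, A - O⟫ + R ^ 2 := by
    have h := norm_sub_sq_real (L - O) (A - O)
    rw [haO2] at h
    have e : L - A = (L - O) - (A - O) := by abel
    rw [e]; exact h
  have hnAval : (a2 + b2 + c2) ^ 2 * ‖L - A‖ ^ 2
      = 2 * (a2 + b2 + c2) * (b2 * c2) - 3 * (a2 * (b2 * c2)) := by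
    linear_combination (a2 + b2 + c2) ^ 2 * hLA2 + hEEn - 2 * (a2 + b2 + c2) * hEa
  -- parametrize A'
  obtain ⟨s, hsA'⟩ := collinear_param hA'col hALn
  have hs0 : s ≠ 0 := by
    rintro rfl
    rw [zero_smul, add_zero] at hsA'
    exact hA'ne hsA'
  have hIA2 : (a2 + b2 + c2) * ⟪A - O, L - A⟫ = -(b2 * c2) := by
    have e : L - A = (L - O) - (A - O) := by abel
    rw [e, inner_sub_right, gaa, real_inner_comm (L - O) (A - O)]
    linear_combination hEa
  have hA'v : A' - O = (A - O) + s • (L - A) := by rw [hsA']; abel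
  have hcircA' : ‖(A - O) + s • (L - A)‖ ^ 2 = R ^ 2 := by
    rw [← hA'v, ← dist_eq_norm, hA'O]
  have hexp := norm_add_sq_real (A - O) (s • (L - A))
  rw [real_inner_smul_right, norm_smul, Real.norm_eq_abs, mul_pow, sq_abs,
    hcircA', haO2] at hexp
  have hskey : s * ((a2 + b2 + c2) * ‖L - A‖ ^ 2) = 2 * (b2 * c2) := by
    have h' : s * (s * ((a2 + b2 + c2) * ‖L - A‖ ^ 2) - 2 * (b2 * c2)) = 0 := by
      linear_combination (-(a2 + b2 + c2)) * hexp + (-2 * s) * hIA2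
    rcases mul_eq_zero.mp h' with h | h
    · exact absurd h hs0
    · linarith
  -- A' - L
  have hA'L : A' - L = (1 - s) • (A - L) := by rw [hsA']; module
  have hnXval : ‖A' - L‖ ^ 2 = (1 - s) ^ 2 * ‖L - A‖ ^ 2 := by
    rw [hA'L, norm_smul, Real.norm_eq_abs, mul_pow, sq_abs, norm_sub_rev A L]
  -- parametrize O₁
  have hA'Onz : A' ≠ O := by
    intro h
    rw [h, dist_self] at hA'O
    linarith
  have hcol' : Collinear ℝ ({A', O, O₁} : Set Pt) := by
    refine hcol.subset ?_
    intro x hx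
    simp only [Set.mem_insert_iff, Set.mem_singleton_iff] at hx ⊢
    tauto
  obtain ⟨t, htO₁⟩ := collinear_param hcol' hA'Onz
  have hOA'n : ‖O - A'‖ ^ 2 = R ^ 2 := by rw [norm_sub_rev, ← dist_eq_norm, hA'O]
  have hr1 : r₁ ^ 2 = t ^ 2 * R ^ 2 := by
    rw [← h1, dist_eq_norm, htO₁]
    have e : A' - (A' + t • (O - A')) = (-t) • (O - A') := by module
    rw [e, norm_smul, Real.norm_eq_abs, mul_pow, sq_abs, hOA'n]
    ring
  have hpolar2 : 2 * ⟪L - A', O - A'⟫ = ‖A' - L‖ ^ 2 + R ^ 2 - ‖L - O‖ ^ 2 := by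
    have h := norm_sub_sq_real (L - A') (O - A')
    have e : (L - A') - (O - A') = L - O := by abel
    rw [e, hOA'n, norm_sub_rev L A'] at h
    linarith
  have hLO₁sq : ‖L - O₁‖ ^ 2 = r₁ ^ 2 := by rw [← dist_eq_norm, h2]
  have hrel2 : ‖A' - L‖ ^ 2 = t * (‖A' - L‖ ^ 2 + (R ^ 2 - ‖L - O‖ ^ 2)) := by
    have e : L - O₁ = (L - A') - t • (O - A') := by rw [htO₁]; module
    have h := norm_sub_sq_real (L - A') (t • (O - A'))
    rw [real_inner_smul_right, norm_smul, Real.norm_eq_abs, mul_pow, sq_abs, hOA'n,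
      norm_sub_rev L A'] at h
    rw [e, h, hr1] at hLO₁sq
    linear_combination hLO₁sq + t * hpolar2
  -- solve for t
  have hP : (a2 + b2 + c2) ^ 2 * (R ^ 2 - ‖L - O‖ ^ 2) = 3 * (a2 * (b2 * c2)) := by
    linear_combination -hEEn
  have h1s' : (a2 + b2 + c2) ^ 2 * ((1 - s) * ‖L - A‖ ^ 2 + (R ^ 2 - ‖L - O‖ ^ 2)) = 0 := by
    linear_combination hnAval - (a2 + b2 + c2) * hskey + hP
  have h1s : (1 - s) * ‖L - A‖ ^ 2 = -(R ^ 2 - ‖L - O‖ ^ 2) := by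
    rcases mul_eq_zero.mp h1s' with h | h
    · exact absurd h (pow_ne_zero 2 hσ0)
    · linarith
  have h3v : ‖L - A‖ ^ 2 * ‖A' - L‖ ^ 2 = (R ^ 2 - ‖L - O‖ ^ 2) ^ 2 := by
    rw [hnXval]
    linear_combination ((1 - s) * ‖L - A‖ ^ 2 - (R ^ 2 - ‖L - O‖ ^ 2)) * h1s
  have h4 : (R ^ 2 - ‖L - O‖ ^ 2) ^ 2
      = t * ((R ^ 2 - ‖L - O‖ ^ 2) ^ 2 + ‖L - A‖ ^ 2 * (R ^ 2 - ‖L - O‖ ^ 2)) := by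
    linear_combination ‖L - A‖ ^ 2 * hrel2 - (1 - t) * h3v
  have hPnA : (a2 + b2 + c2) ^ 2 * ((R ^ 2 - ‖L - O‖ ^ 2) + ‖L - A‖ ^ 2)
      = 2 * (a2 + b2 + c2) * (b2 * c2) := by
    linear_combination hP + hnAval
  have h5 : (3 * (a2 * (b2 * c2))) ^ 2
      = t * ((3 * (a2 * (b2 * c2))) * (2 * (a2 + b2 + c2) * (b2 * c2))) := by
    linear_combination (a2 + b2 + c2) ^ 4 * h4
      - ((a2 + b2 + c2) ^ 2 * (R ^ 2 - ‖L - O‖ ^ 2) + 3 * (a2 * (b2 * c2))) * hP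
      + (t * ((a2 + b2 + c2) ^ 2 * (R ^ 2 - ‖L - O‖ ^ 2))) * hPnA
      + (2 * t * ((a2 + b2 + c2) * (b2 * c2))) * hP
  have hK : (3 * (a2 * ((b2 * c2) * (b2 * c2)))) ≠ 0 := by positivity
  have ht2σ : 2 * (a2 + b2 + c2) * t = 3 * a2 := by
    have h6 : (3 * (a2 * ((b2 * c2) * (b2 * c2)))) * (2 * (a2 + b2 + c2) * t)
        = (3 * (a2 * ((b2 * c2) * (b2 * c2)))) * (3 * a2) := by
      linear_combination -h5
    exact mul_left_cancel₀ hK h6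
  have hstkey : (1 - t) * s = 1 := by
    have hK2pos : (0:ℝ) < 2 * (a2 + b2 + c2) ^ 2 * ‖L - A‖ ^ 2 :=
      mul_pos (mul_pos two_pos (pow_pos hσ 2)) hnA
    have h7 : (2 * (a2 + b2 + c2) ^ 2 * ‖L - A‖ ^ 2) * ((1 - t) * s)
        = (2 * (a2 + b2 + c2) ^ 2 * ‖L - A‖ ^ 2) * 1 := by
      linear_combination (2 * (a2 + b2 + c2) * (1 - t)) * hskey
        + (-2 * (b2 * c2)) * ht2σ + (-2) * hnAval
    exact mul_left_cancel₀ (ne_of_gt hK2pos) h7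
  have hO₁f : O₁ = L + t • (O - A) := by
    rw [htO₁, hsA']
    match_scalars <;> first
      | ring1
      | linear_combination hstkey
      | linear_combination -hstkey
      | linear_combination t * hstkey
      | linear_combination (-t) * hstkey
  -- parametrize X on line BC
  have hXcol : Collinear ℝ ({B, C, X} : Set Pt) := by
    refine (collinear_insert_of_mem_affineSpan_pair hX).subset ?_
    intro y hy
    simp only [Set.mem_insert_iff, Set.mem_singleton_iff] at hy ⊢
    tauto
  obtain ⟨μ, hXμ⟩ := collinear_param hXcol hbc
  -- final computation
  have goal_eq : dist X (L + (3/4 : ℝ) • (O - L)) ^ 2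
      = ‖X - O₁‖ ^ 2 + 2 * ⟪X - O₁, O₁ - (L + (3/4 : ℝ) • (O - L))⟫
        + ‖O₁ - (L + (3/4 : ℝ) • (O - L))‖ ^ 2 := by
    rw [dist_eq_norm]
    have e : X - (L + (3/4 : ℝ) • (O - L))
        = (X - O₁) + (O₁ - (L + (3/4 : ℝ) • (O - L))) := by abel
    rw [e, norm_add_sq_real]
  have hXn : ‖X - O₁‖ ^ 2 = t ^ 2 * R ^ 2 := by
    rw [← dist_eq_norm, hXO]; exact hr1
  have hXOv : X - O₁
      = (-1 : ℝ) • (L - O) + t • (A - O) + (1 - μ) • (B - O) + μ • (C - O) := by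
    rw [hXμ, hO₁f]; module
  have hOMv : O₁ - (L + (3/4 : ℝ) • (O - L))
      = (3/4 : ℝ) • (L - O) + (-t) • (A - O) + (0 : ℝ) • (B - O) + (0 : ℝ) • (C - O) := by
    rw [hO₁f]; module
  rw [goal_eq, hXn, hXOv, hOMv, ← real_inner_self_eq_norm_sq,
    expand4 (L - O) (A - O) (B - O) (C - O) _ _ _ _ _ _ _ _ _ _
      rfl gaa gbb gcc rfl rfl rfl gab gac gbc (-1) t (1 - μ) μ (3/4) (-t) 0 0,
    expand4 (L - O) (A - O) (B - O) (C - O) _ _ _ _ _ _ _ _ _ _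
      rfl gaa gbb gcc rfl rfl rfl gab gac gbc (3/4) (-t) 0 0 (3/4) (-t) 0 0,
    eq_div_iff (by positivity : (16 : ℝ) * (a2 + b2 + c2) ^ 2 ≠ 0)]
  linear_combination (-15 : ℝ) * hEE + (32 * (a2 + b2 + c2) * t) * hEa
    + (24 * (a2 + b2 + c2) * (1 - μ)) * hEb + (24 * (a2 + b2 + c2) * μ) * hEc
    + (8 * (c2 ^ 2 * (1 - μ) - b2 * c2 + b2 ^ 2 * μ + a2 * c2 * (1 - μ) + a2 * b2 * μ)) * ht2σ

theorem stmt7    (A B C : Pt) (hABC : AffineIndependent ℝ ![A, B, C])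
    (ω : EuclideanGeometry.Sphere Pt) (hr : 0 < ω.radius)
    (hA : A ∈ ω) (hB : B ∈ ω) (hC : C ∈ ω)
    (L : Pt) (hL : L = lemoinePoint A B C)
    (A' : Pt) (hA'w : A' ∈ ω) (hA'ne : A' ≠ A) (hA'col : Collinear ℝ ({A, L, A'} : Set Pt))
    (B' : Pt) (hB'w : B' ∈ ω) (hB'ne : B' ≠ B) (hB'col : Collinear ℝ ({B, L, B'} : Set Pt))
    (C' : Pt) (hC'w : C' ∈ ω) (hC'ne : C' ≠ C) (hC'col : Collinear ℝ ({C, L, C'} : Set Pt))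
    (ω₁ : EuclideanGeometry.Sphere Pt) (hω₁1 : A' ∈ ω₁) (hω₁2 : L ∈ ω₁)
    (hω₁t : CircleTangentAt ω₁ ω A')
    (A_b A_c : Pt) (hA_bA_c : A_b ≠ A_c)
    (hA_bc : A_b ∈ ω₁) (hA_bl : A_b ∈ affineSpan ℝ ({B, C} : Set Pt))
    (hA_cc : A_c ∈ ω₁) (hA_cl : A_c ∈ affineSpan ℝ ({B, C} : Set Pt))
    (ω₂ : EuclideanGeometry.Sphere Pt) (hω₂1 : B' ∈ ω₂) (hω₂2 : L ∈ ω₂)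
    (hω₂t : CircleTangentAt ω₂ ω B')
    (B_c B_a : Pt) (hB_cB_a : B_c ≠ B_a)
    (hB_cc : B_c ∈ ω₂) (hB_cl : B_c ∈ affineSpan ℝ ({C, A} : Set Pt))
    (hB_ac : B_a ∈ ω₂) (hB_al : B_a ∈ affineSpan ℝ ({C, A} : Set Pt))
    (ω₃ : EuclideanGeometry.Sphere Pt) (hω₃1 : C' ∈ ω₃) (hω₃2 : L ∈ ω₃)
    (hω₃t : CircleTangentAt ω₃ ω C')
    (C_a C_b : Pt) (hC_aC_b : C_a ≠ C_b)
    (hC_ac : C_a ∈ ω₃) (hC_al : C_a ∈ affineSpan ℝ ({A, B} : Set Pt))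
    (hC_bc : C_b ∈ ω₃) (hC_bl : C_b ∈ affineSpan ℝ ({A, B} : Set Pt))
    : ∃ s : EuclideanGeometry.Sphere Pt, (A_b ∈ s ∧ A_c ∈ s ∧ B_a ∈ s ∧ B_c ∈ s ∧ C_a ∈ s ∧ C_b ∈ s) ∧
      s.center - L = (3 / 4 : ℝ) • (ω.center - L) := by
  -- distinctness of the vertices
  have hAB : A ≠ B := by
    have := hABC.injective.ne (show (0 : Fin 3) ≠ 1 by decide)
    simpa using this
  have hBC : B ≠ C := by
    have := hABC.injective.ne (show (1 : Fin 3) ≠ 2 by decide)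
    simpa using this
  have hCA : C ≠ A := by
    have := hABC.injective.ne (show (2 : Fin 3) ≠ 0 by decide)
    simpa using this
  have hda : (0:ℝ) < dist B C ^ 2 := pow_pos (dist_pos.mpr hBC) 2
  have hdb : (0:ℝ) < dist C A ^ 2 := pow_pos (dist_pos.mpr hCA) 2
  have hdc : (0:ℝ) < dist A B ^ 2 := pow_pos (dist_pos.mpr hAB) 2
  have hσ0 : dist B C ^ 2 + dist C A ^ 2 + dist A B ^ 2 ≠ 0 := by positivity
  -- the barycentric description of L, multiplied out
  have hLv : (dist B C ^ 2 + dist C A ^ 2 + dist A B ^ 2) • (L - ω.center)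
      = dist B C ^ 2 • (A - ω.center) + dist C A ^ 2 • (B - ω.center)
        + dist A B ^ 2 • (C - ω.center) := by
    rw [hL]
    unfold lemoinePoint
    match_scalars <;>
      first
        | ring1
        | (field_simp [hσ0])
        | (field_simp [hσ0]; ring1)
  have hLv2 : (dist C A ^ 2 + dist A B ^ 2 + dist B C ^ 2) • (L - ω.center)
      = dist C A ^ 2 • (B - ω.center) + dist A B ^ 2 • (C - ω.center)
        + dist B C ^ 2 • (A - ω.center) := by
    rw [show dist C A ^ 2 + dist A B ^ 2 + dist B C ^ 2
        = dist B C ^ 2 + dist C A ^ 2 + dist A B ^ 2 from by ring, hLv]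
    abel
  have hLv3 : (dist A B ^ 2 + dist B C ^ 2 + dist C A ^ 2) • (L - ω.center)
      = dist A B ^ 2 • (C - ω.center) + dist B C ^ 2 • (A - ω.center)
        + dist C A ^ 2 • (B - ω.center) := by
    rw [show dist A B ^ 2 + dist B C ^ 2 + dist C A ^ 2
        = dist B C ^ 2 + dist C A ^ 2 + dist A B ^ 2 from by ring, hLv]
    abel
  have hAm := (EuclideanGeometry.mem_sphere).mp hA
  have hBm := (EuclideanGeometry.mem_sphere).mp hB
  have hCm := (EuclideanGeometry.mem_sphere).mp hC
  have e1 := key ω.center A B C L A' ω₁.center A_b ω.radius ω₁.radius hr hAm hBm hCm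
    hBC hCA hAB hLv hA'ne hA'col ((EuclideanGeometry.mem_sphere).mp hA'w) hω₁t.2.2
    ((EuclideanGeometry.mem_sphere).mp hω₁1) ((EuclideanGeometry.mem_sphere).mp hω₁2)
    hA_bl ((EuclideanGeometry.mem_sphere).mp hA_bc)
  have e2 := key ω.center A B C L A' ω₁.center A_c ω.radius ω₁.radius hr hAm hBm hCm
    hBC hCA hAB hLv hA'ne hA'col ((EuclideanGeometry.mem_sphere).mp hA'w) hω₁t.2.2
    ((EuclideanGeometry.mem_sphere).mp hω₁1) ((EuclideanGeometry.mem_sphere).mp hω₁2)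
    hA_cl ((EuclideanGeometry.mem_sphere).mp hA_cc)
  have e3 := key ω.center B C A L B' ω₂.center B_c ω.radius ω₂.radius hr hBm hCm hAm
    hCA hAB hBC hLv2 hB'ne hB'col ((EuclideanGeometry.mem_sphere).mp hB'w) hω₂t.2.2
    ((EuclideanGeometry.mem_sphere).mp hω₂1) ((EuclideanGeometry.mem_sphere).mp hω₂2)
    hB_cl ((EuclideanGeometry.mem_sphere).mp hB_cc)
  have e4 := key ω.center B C A L B' ω₂.center B_a ω.radius ω₂.radius hr hBm hCm hAm
    hCA hAB hBC hLv2 hB'ne hB'col ((EuclideanGeometry.mem_sphere).mp hB'w) hω₂t.2.2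
    ((EuclideanGeometry.mem_sphere).mp hω₂1) ((EuclideanGeometry.mem_sphere).mp hω₂2)
    hB_al ((EuclideanGeometry.mem_sphere).mp hB_ac)
  have e5 := key ω.center C A B L C' ω₃.center C_a ω.radius ω₃.radius hr hCm hAm hBm
    hAB hBC hCA hLv3 hC'ne hC'col ((EuclideanGeometry.mem_sphere).mp hC'w) hω₃t.2.2
    ((EuclideanGeometry.mem_sphere).mp hω₃1) ((EuclideanGeometry.mem_sphere).mp hω₃2)
    hC_al ((EuclideanGeometry.mem_sphere).mp hC_ac)
  have e6 := key ω.center C A B L C' ω₃.center C_b ω.radius ω₃.radius hr hCm hAm hBm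
    hAB hBC hCA hLv3 hC'ne hC'col ((EuclideanGeometry.mem_sphere).mp hC'w) hω₃t.2.2
    ((EuclideanGeometry.mem_sphere).mp hω₃1) ((EuclideanGeometry.mem_sphere).mp hω₃2)
    hC_bl ((EuclideanGeometry.mem_sphere).mp hC_bc)
  set Φ : ℝ := (9 * ω.radius ^ 2 * (dist B C ^ 2 + dist C A ^ 2 + dist A B ^ 2) ^ 2
      - 3 * (dist B C ^ 2 * (dist C A ^ 2 * dist A B ^ 2)))
    / (16 * (dist B C ^ 2 + dist C A ^ 2 + dist A B ^ 2) ^ 2) with hΦ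
  have bridge2 : (9 * ω.radius ^ 2 * (dist C A ^ 2 + dist A B ^ 2 + dist B C ^ 2) ^ 2
      - 3 * (dist C A ^ 2 * (dist A B ^ 2 * dist B C ^ 2)))
    / (16 * (dist C A ^ 2 + dist A B ^ 2 + dist B C ^ 2) ^ 2) = Φ := by
    rw [hΦ]; ring_nf
  have bridge3 : (9 * ω.radius ^ 2 * (dist A B ^ 2 + dist B C ^ 2 + dist C A ^ 2) ^ 2
      - 3 * (dist A B ^ 2 * (dist B C ^ 2 * dist C A ^ 2)))
    / (16 * (dist A B ^ 2 + dist B C ^ 2 + dist C A ^ 2) ^ 2) = Φ := by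
    rw [hΦ]; ring_nf
  rw [bridge2] at e3 e4
  rw [bridge3] at e5 e6
  refine ⟨⟨L + (3/4 : ℝ) • (ω.center - L), Real.sqrt Φ⟩, ⟨?_, ?_, ?_, ?_, ?_, ?_⟩, ?_⟩
  · rw [EuclideanGeometry.mem_sphere]
    show dist A_b (L + (3/4 : ℝ) • (ω.center - L)) = Real.sqrt Φ
    rw [← e1]
    exact (Real.sqrt_sq dist_nonneg).symm
  · rw [EuclideanGeometry.mem_sphere]
    show dist A_c (L + (3/4 : ℝ) • (ω.center - L)) = Real.sqrt Φ
    rw [← e2]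
    exact (Real.sqrt_sq dist_nonneg).symm
  · rw [EuclideanGeometry.mem_sphere]
    show dist B_a (L + (3/4 : ℝ) • (ω.center - L)) = Real.sqrt Φ
    rw [← e4]
    exact (Real.sqrt_sq dist_nonneg).symm
  · rw [EuclideanGeometry.mem_sphere]
    show dist B_c (L + (3/4 : ℝ) • (ω.center - L)) = Real.sqrt Φ
    rw [← e3]
    exact (Real.sqrt_sq dist_nonneg).symm
  · rw [EuclideanGeometry.mem_sphere]
    show dist C_a (L + (3/4 : ℝ) • (ω.center - L)) = Real.sqrt Φ
    rw [← e5]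
    exact (Real.sqrt_sq dist_nonneg).symm
  · rw [EuclideanGeometry.mem_sphere]
    show dist C_b (L + (3/4 : ℝ) • (ω.center - L)) = Real.sqrt Φ
    rw [← e6]
    exact (Real.sqrt_sq dist_nonneg).symm
  · show L + (3/4 : ℝ) • (ω.center - L) - L = (3 / 4 : ℝ) • (ω.center - L)
    rw [add_sub_cancel_left]
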